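/- For $1 \le p < q < \infty$, there exist a Banach space $E$ and a continuous bilinear operator $A : E \times E \to E$ such that $(A(x_j, y_j))_j \in \ell_p(E)$ whenever $(x_j) \in \ell_p^w(E)$ and $(y_j) \in \ell_q^w(E)$, but the transpose $A^t(x,y) := A(y,x)$ does not have this property. -/

import Mathlib

open Filter Topology

noncomputable def lpwNorm {E : Type*} [NormedAddCommGroup E] [NormedSpace ℝ E]
    (p : ℝ) (x : ℕ → E) : ℝ :=
  ⨆ f : {f : E →L[ℝ] ℝ // ‖f‖ ≤ 1}, (∑' j, |f.1 (x j)| ^ p) ^ (1 / p)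

def MemLpw {E : Type*} [NormedAddCommGroup E] [NormedSpace ℝ E]
    (p : ℝ) (x : ℕ → E) : Prop :=
  ∀ f : E →L[ℝ] ℝ, Summable fun j => |f (x j)| ^ p

variable {E F : Type*} [NormedAddCommGroup E] [NormedSpace ℝ E] [CompleteSpace E]
  [NormedAddCommGroup F] [NormedSpace ℝ F] [CompleteSpace F]

structure SummingCounterexample (p q : ℝ) where
  E : Type
  [grp : NormedAddCommGroup E]
  [sp : NormedSpace ℝ E]
  [cs : CompleteSpace E]
  A : E →L[ℝ] E →L[ℝ] E
  summing : ∀ x y : ℕ → E, MemLpw p x → MemLpw q y →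
    Summable fun j => ‖A (x j) (y j)‖ ^ p
  not_transpose : ¬ ∀ x y : ℕ → E, MemLpw p x → MemLpw q y →
    Summable fun j => ‖A (y j) (x j)‖ ^ p

/-!
Take `E = ℓ∞` and `A x y = x₀ • y`. A weakly `q`-summable sequence `(yⱼ)` is bounded by the
uniform boundedness principle, so `‖A xⱼ yⱼ‖ ≤ C |(xⱼ)₀|`, which is `p`-summable when `(xⱼ)` is
weakly `p`-summable. For the transpose, the unit vectors `eⱼ` of `ℓ∞` are weakly `1`-summable,
hence weakly `p`-summable, and `yⱼ = (j + 1)^(-1/p) • e₀` is weakly `q`-summable since `q / p > 1`,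
yet `‖A yⱼ eⱼ‖ ^ p = 1 / (j + 1)`.
-/

open ENNReal

section WeaklySummable

variable {V : Type*} [NormedAddCommGroup V] [NormedSpace ℝ V] {p q : ℝ}

theorem MemLpw.of_exponent_ge {x : ℕ → V} (hx : MemLpw p x) (hp : 0 < p) {p' : ℝ}
    (hpp' : p ≤ p') : MemLpw p' x := by
  intro f
  have hp' : 0 < p' := hp.trans_le hpp'
  have hmem : Memℓp (fun j => f (x j)) (ENNReal.ofReal p) :=
    (memℓp_gen_iff (by rwa [ENNReal.toReal_ofReal hp.le])).2 (by simpa [hp.le] using hx f)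
  simpa [hp'.le] using (memℓp_gen_iff (by rwa [ENNReal.toReal_ofReal hp'.le])).1
    (hmem.of_exponent_ge (ENNReal.ofReal_le_ofReal hpp'))

theorem MemLpw.tendsto_zero {y : ℕ → V} (hy : MemLpw q y) (hq : 0 < q) (f : V →L[ℝ] ℝ) :
    Tendsto (fun j => f (y j)) atTop (𝓝 0) := by
  rw [tendsto_zero_iff_norm_tendsto_zero]
  have h := ((hy f).tendsto_atTop_zero).rpow_const (p := q⁻¹) (Or.inr (by positivity))
  simpa [Real.rpow_rpow_inv (abs_nonneg _) hq.ne', Real.zero_rpow (inv_ne_zero hq.ne')] using h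

theorem MemLpw.exists_norm_le {y : ℕ → V} (hy : MemLpw q y) (hq : 0 < q) :
    ∃ C, ∀ j, ‖y j‖ ≤ C := by
  obtain ⟨C, hC⟩ := banach_steinhaus (g := fun j => NormedSpace.inclusionInDoubleDual ℝ V (y j))
    fun f => by
      obtain ⟨C, hC⟩ := (hy.tendsto_zero hq f).norm.bddAbove_range
      exact ⟨C, fun j => hC ⟨j, rfl⟩⟩
  refine ⟨C, fun j => ?_⟩
  rw [← (NormedSpace.inclusionInDoubleDualLi ℝ).norm_map]
  exact hC j

theorem memLpw_smul_const {c : ℕ → ℝ} (hc : Summable fun j => |c j| ^ q) (v : V) :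
    MemLpw q fun j => c j • v := by
  intro f
  simpa [abs_mul, Real.mul_rpow (abs_nonneg _) (abs_nonneg _)] using hc.mul_right (|f v| ^ q)

theorem MemLpw.summable_norm_smul_rpow {x y : ℕ → V} (hx : MemLpw p x) (hy : MemLpw q y)
    (hp : 0 ≤ p) (hq : 0 < q) (φ : V →L[ℝ] ℝ) :
    Summable fun j => ‖φ (x j) • y j‖ ^ p := by
  obtain ⟨C, hC⟩ := hy.exists_norm_le hq
  refine ((hx φ).mul_right (C ^ p)).of_nonneg_of_le (fun j => by positivity) fun j => ?_
  rw [norm_smul, Real.norm_eq_abs, ← Real.mul_rpow (abs_nonneg _) ((norm_nonneg _).trans (hC j))]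
  exact Real.rpow_le_rpow (by positivity) (mul_le_mul_of_nonneg_left (hC j) (abs_nonneg _)) hp

end WeaklySummable

local notation "ℓ∞" => lp (fun _ : ℕ => ℝ) ∞

theorem sum_abs_apply_lp_single_le_opNorm (f : ℓ∞ →L[ℝ] ℝ) (s : Finset ℕ) :
    ∑ j ∈ s, |f (lp.single ∞ j 1)| ≤ ‖f‖ := by
  set z : ℓ∞ := ∑ j ∈ s, lp.single ∞ j (SignType.sign (f (lp.single ∞ j 1)) : ℝ)
  have hz : ‖z‖ ≤ 1 := by
    refine lp.norm_le_of_forall_le zero_le_one fun i => ?_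
    simp only [z, lp.coeFn_sum, Finset.sum_apply, lp.single_apply, Finset.sum_pi_single]
    split_ifs
    · cases SignType.sign (f (lp.single ∞ i 1)) <;> simp
    · simp
  have hfz : f z = ∑ j ∈ s, |f (lp.single ∞ j 1)| := by
    simp only [z, map_sum]
    refine Finset.sum_congr rfl fun j _ => ?_
    rw [← sign_mul_self, ← smul_eq_mul, ← map_smul, ← lp.single_smul, smul_eq_mul, mul_one]
  calc ∑ j ∈ s, |f (lp.single ∞ j 1)| = f z := hfz.symm
    _ ≤ ‖f‖ * ‖z‖ := (le_abs_self _).trans (f.le_opNorm z)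
    _ ≤ ‖f‖ := mul_le_of_le_one_right (norm_nonneg f) hz

theorem memLpw_one_lp_single : MemLpw 1 fun j => lp.single ∞ j (1 : ℝ) := fun f =>
  summable_of_sum_le (c := ‖f‖) (fun j => by positivity)
    fun s => by simpa using sum_abs_apply_lp_single_le_opNorm f s

theorem summable_abs_natCast_add_one_rpow_neg_inv_rpow_iff {p r : ℝ} (hp : 0 < p) :
    Summable (fun j : ℕ => |((j : ℝ) + 1) ^ (-p⁻¹)| ^ r) ↔ p < r := by
  have h : ∀ j : ℕ, |((j : ℝ) + 1) ^ (-p⁻¹)| ^ r = 1 / |(j : ℝ) + 1| ^ (r / p) := by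
    intro j
    rw [abs_of_nonneg (by positivity), abs_of_nonneg (by positivity),
      ← Real.rpow_mul (by positivity), neg_mul, Real.rpow_neg (by positivity), one_div, inv_mul_eq_div]
  simp_rw [h, Real.summable_one_div_nat_add_rpow, one_lt_div hp]

theorem stmt_8 (p q : ℝ) (hp : 1 ≤ p) (hpq : p < q) :
    Nonempty (SummingCounterexample p q) := by
  have hp0 : 0 < p := zero_lt_one.trans_le hp
  let φ := lp.evalCLM ℝ (fun _ : ℕ => ℝ) ∞ 0
  let e : ℕ → ℓ∞ := fun j => lp.single ∞ j 1
  let c : ℕ → ℝ := fun j => ((j : ℝ) + 1) ^ (-p⁻¹)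
  refine ⟨{ E := ℓ∞
            A := (ContinuousLinearMap.lsmul ℝ ℝ).comp φ
            summing := fun x y hx hy => hx.summable_norm_smul_rpow hy hp0.le (hp0.trans hpq) φ
            not_transpose := fun h => ?_ }⟩
  have he : MemLpw p e := memLpw_one_lp_single.of_exponent_ge one_pos hp
  have hce : MemLpw q fun j => c j • e 0 :=
    memLpw_smul_const ((summable_abs_natCast_add_one_rpow_neg_inv_rpow_iff hp0).2 hpq) _
  have hnorm : ∀ j, ‖φ (c j • e 0) • e j‖ ^ p = |c j| ^ p := fun j => by
    simp [φ, e, lp.evalCLM, norm_smul, lp.norm_single ENNReal.zero_lt_top]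
  exact lt_irrefl p <| (summable_abs_natCast_add_one_rpow_neg_inv_rpow_iff hp0).1 <|
    (h e _ he hce).congr hnorm
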